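/- Let s(t) ∈ ℝ^{3^N} be a solution of the exact URTU model ds^T/dt = s^T Q with s(t) a probability vector for each t. For a ∈ {0,1,2}, define the marginals Pr{X_i(t)=a} = Σ_{x : x_i = a} s_{⟨x⟩}(t) and Pr{X_i(t)=a, X_j(t)=b} = Σ_{x : x_i = a, x_j = b} s_{⟨x⟩}(t), where the sums range over x ∈ {0,1,2}^N and ⟨x⟩ = Σ_k x_k 3^{k−1}; write R_i(t) = Pr{X_i(t)=1} and T_i(t) = Pr{X_i(t)=2}. Then for every i = 1,…,N: dR_i/dt = Σ_j β_ij^U Pr{X_i(t)=0, X_j(t)=1} + Σ_j β_ij^T Pr{X_i(t)=2, X_j(t)=1} − Σ_j γ_ij^R Pr{X_i(t)=1, X_j(t)=2} − δ_i^R R_i(t), and dT_i/dt = Σ_j γ_ij^U Pr{X_i(t)=0, X_j(t)=2} + Σ_j γ_ij^R Pr{X_i(t)=1, X_j(t)=2} − Σ_j β_ij^T Pr{X_i(t)=2, X_j(t)=1} − δ_i^T T_i(t). -/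

import Mathlib

open Filter Topology

/-- Transition rate at which person `m`, in group state `x`, switches to the
individual state `a` (`0` = uncertain, `1` = rumor-believing, `2` =
truth-believing). -/
noncomputable def personRate {N : ℕ} (βU βT γU γR : Fin N → Fin N → ℝ)
    (δR δT : Fin N → ℝ) (x : Fin N → Fin 3) (m : Fin N) (a : Fin 3) : ℝ :=
  if x m = 1 ∧ a = 0 then δR m
  else if x m = 2 ∧ a = 0 then δT m
  else if x m = 0 ∧ a = 1 then ∑ k, if x k = 1 then βU m k else 0
  else if x m = 2 ∧ a = 1 then ∑ k, if x k = 1 then βT m k else 0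
  else if x m = 0 ∧ a = 2 then ∑ k, if x k = 2 then γU m k else 0
  else if x m = 1 ∧ a = 2 then ∑ k, if x k = 2 then γR m k else 0
  else 0

/-- Off-diagonal entry of the generator: rate from group state `x` to `y`
(nonzero only when `y` differs from `x` in exactly one coordinate). -/
noncomputable def offRate {N : ℕ} (βU βT γU γR : Fin N → Fin N → ℝ)
    (δR δT : Fin N → ℝ) (x y : Fin N → Fin 3) : ℝ :=
  ∑ m, if y = Function.update x m (y m) ∧ y m ≠ x m
    then personRate βU βT γU γR δR δT x m (y m) else 0

/-- Infinitesimal generator `Q` of the original URTU model (rows indexed by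
current group state, columns by the next state). -/
noncomputable def generatorQ {N : ℕ} (βU βT γU γR : Fin N → Fin N → ℝ)
    (δR δT : Fin N → ℝ) : Matrix (Fin N → Fin 3) (Fin N → Fin 3) ℝ :=
  Matrix.of fun x y =>
    if y = x then -(∑ z, offRate βU βT γU γR δR δT x z)
    else offRate βU βT γU γR δR δT x y

section Aux
variable {N : ℕ} (βU βT γU γR : Fin N → Fin N → ℝ) (δR δT : Fin N → ℝ)

lemma ite_sum_pull {α : Type*} (u : Finset α) (c : Prop) [Decidable c] (F : α → ℝ) :
    (if c then ∑ m ∈ u, F m else 0) = ∑ m ∈ u, if c then F m else 0 := by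
  split <;> simp

lemma sum_update_eq (f : (Fin N → Fin 3) → ℝ) (x : Fin N → Fin 3) (m : Fin N) :
    ∑ y : Fin N → Fin 3, (if y = Function.update x m (y m) then f y else 0)
      = ∑ b : Fin 3, f (Function.update x m b) := by
  classical
  rw [← Finset.sum_filter]
  have himg : Finset.univ.filter (fun y : Fin N → Fin 3 => y = Function.update x m (y m))
      = Finset.univ.image (fun b : Fin 3 => Function.update x m b) := by
    ext y
    simp only [Finset.mem_filter, Finset.mem_image, Finset.mem_univ, true_and]
    constructor
    · intro h; exact ⟨y m, h.symm⟩
    · rintro ⟨b, rfl⟩; simp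
  rw [himg, Finset.sum_image]
  intro a _ b _ h
  simpa using congrFun h m

lemma offRate_self (x : Fin N → Fin 3) : offRate βU βT γU γR δR δT x x = 0 := by
  simp [offRate]

lemma offRate_sum_pred (x : Fin N → Fin 3) (g : (Fin N → Fin 3) → Prop) [DecidablePred g] :
    ∑ y : Fin N → Fin 3, (if g y then offRate βU βT γU γR δR δT x y else 0)
      = ∑ m, ∑ b : Fin 3, if b ≠ x m ∧ g (Function.update x m b)
          then personRate βU βT γU γR δR δT x m b else 0 := by
  classical
  unfold offRate
  simp only [ite_sum_pull]
  rw [Finset.sum_comm]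
  refine Finset.sum_congr rfl fun m _ => ?_
  have h1 : ∀ y : Fin N → Fin 3,
      (if g y then (if y = Function.update x m (y m) ∧ y m ≠ x m
        then personRate βU βT γU γR δR δT x m (y m) else 0) else 0)
      = (if y = Function.update x m (y m) then
          (if (y m ≠ x m ∧ g y) then personRate βU βT γU γR δR δT x m (y m) else 0) else 0) := by
    intro y; split_ifs <;> first | rfl | tauto
  simp only [h1]
  rw [sum_update_eq]
  refine Finset.sum_congr rfl fun b _ => ?_
  simp

end Aux

section Key
variable {N : ℕ} (βU βT γU γR : Fin N → Fin N → ℝ) (δR δT : Fin N → ℝ)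

lemma keyQ (x : Fin N → Fin 3) (i : Fin N) (a : Fin 3) :
    ∑ y : Fin N → Fin 3, (if y i = a then generatorQ βU βT γU γR δR δT x y else 0)
      = if x i = a
          then -(∑ b : Fin 3, if b = a then 0 else personRate βU βT γU γR δR δT x i b)
          else personRate βU βT γU γR δR δT x i a := by
  classical
  have hQ : ∀ y, generatorQ βU βT γU γR δR δT x y
      = offRate βU βT γU γR δR δT x y
        + (if y = x then -(∑ z, offRate βU βT γU γR δR δT x z) else 0) := by
    intro y
    by_cases h : y = x
    · simp [generatorQ, h, offRate_self]
    · simp [generatorQ, h]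
  simp only [hQ]
  have hsplit : ∀ y : Fin N → Fin 3,
      (if y i = a then offRate βU βT γU γR δR δT x y
          + (if y = x then -(∑ z, offRate βU βT γU γR δR δT x z) else 0) else 0)
      = (if y i = a then offRate βU βT γU γR δR δT x y else 0)
        + (if y = x then (if y i = a then -(∑ z, offRate βU βT γU γR δR δT x z) else 0)
            else 0) := by
    intro y; split_ifs <;> simp
  simp only [hsplit]
  rw [Finset.sum_add_distrib, offRate_sum_pred βU βT γU γR δR δT x (fun y => y i = a),
    Finset.sum_ite_eq' Finset.univ x
      (fun y => if y i = a then -(∑ z, offRate βU βT γU γR δR δT x z) else 0)]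
  simp only [Finset.mem_univ, if_true]
  have hrow : (∑ z, offRate βU βT γU γR δR δT x z)
      = ∑ m, ∑ b : Fin 3, if b ≠ x m then personRate βU βT γU γR δR δT x m b else 0 := by
    have h := offRate_sum_pred βU βT γU γR δR δT x (fun _ => True)
    simpa using h
  rw [hrow]
  by_cases hxa : x i = a
  · rw [if_pos hxa, if_pos hxa]
    have hm : ∀ m : Fin N,
        (∑ b : Fin 3, if b ≠ x m then personRate βU βT γU γR δR δT x m b else 0)
        = (∑ b : Fin 3, if b ≠ x m ∧ Function.update x m b i = a
              then personRate βU βT γU γR δR δT x m b else 0)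
          + (if m = i then (∑ b : Fin 3, if b = a then 0
              else personRate βU βT γU γR δR δT x i b) else 0) := by
      intro m
      by_cases hmi : m = i
      · subst hmi
        simp only [Function.update_self, eq_self_iff_true, if_true]
        rw [← Finset.sum_add_distrib]
        refine Finset.sum_congr rfl fun b _ => ?_
        by_cases hb : b = a
        · subst hb; simp [hxa]
        · simp [hxa, hb]
      · have hmi' : ¬ (i = m) := fun h => hmi h.symm
        simp [hmi, hmi', hxa, Function.update_apply]
    have hS : (∑ m, ∑ b : Fin 3, if b ≠ x m then personRate βU βT γU γR δR δT x m b else 0)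
        = (∑ m, ∑ b : Fin 3, if b ≠ x m ∧ Function.update x m b i = a
              then personRate βU βT γU γR δR δT x m b else 0)
          + (∑ b : Fin 3, if b = a then 0 else personRate βU βT γU γR δR δT x i b) := by
      rw [Finset.sum_congr rfl fun m _ => hm m, Finset.sum_add_distrib,
        Finset.sum_ite_eq' Finset.univ i]
      simp
    rw [hS]; ring
  · rw [if_neg hxa, if_neg hxa]
    have hm2 : ∀ m : Fin N,
        (∑ b : Fin 3, if b ≠ x m ∧ Function.update x m b i = a
            then personRate βU βT γU γR δR δT x m b else 0)
        = (if m = i then personRate βU βT γU γR δR δT x i a else 0) := by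
      intro m
      by_cases hmi : m = i
      · subst hmi
        simp only [Function.update_self, eq_self_iff_true, if_true]
        have hax : a ≠ x m := fun h => hxa h.symm
        have hba : ∀ b : Fin 3, (if b ≠ x m ∧ b = a
              then personRate βU βT γU γR δR δT x m b else 0)
            = (if b = a then personRate βU βT γU γR δR δT x m a else 0) := by
          intro b
          by_cases hb : b = a
          · subst hb; simp [hax]
          · simp [hb]
        simp only [hba]
        rw [Finset.sum_ite_eq' Finset.univ a]
        simp
      · have hmi' : ¬ (i = m) := fun h => hmi h.symm
        simp [hmi, hmi', hxa, Function.update_apply]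
    rw [Finset.sum_congr rfl fun m _ => hm2 m, Finset.sum_ite_eq' Finset.univ i]
    simp

end Key

section Deriv
variable {N : ℕ} (βU βT γU γR : Fin N → Fin N → ℝ) (δR δT : Fin N → ℝ)

lemma marginal_hasDerivAt (s : ℝ → (Fin N → Fin 3) → ℝ)
    (hsol : ∀ (y : Fin N → Fin 3) (t : ℝ), HasDerivAt (fun τ => s τ y)
      (∑ x, s t x * generatorQ βU βT γU γR δR δT x y) t)
    (i : Fin N) (a : Fin 3) (t : ℝ) :
    HasDerivAt (fun τ => ∑ x, if x i = a then s τ x else 0)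
      (∑ x, s t x * (if x i = a
          then -(∑ b : Fin 3, if b = a then 0 else personRate βU βT γU γR δR δT x i b)
          else personRate βU βT γU γR δR δT x i a)) t := by
  classical
  have hd : HasDerivAt (fun τ => ∑ x, if x i = a then s τ x else 0)
      (∑ y, if y i = a then (∑ x, s t x * generatorQ βU βT γU γR δR δT x y) else 0) t := by
    apply HasDerivAt.fun_sum
    intro y _
    by_cases h : y i = a
    · simpa [h] using hsol y t
    · simpa [h] using hasDerivAt_const t (0:ℝ)
  have heq : (∑ y, if y i = a then (∑ x, s t x * generatorQ βU βT γU γR δR δT x y) else 0)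
      = ∑ x, s t x * (if x i = a
          then -(∑ b : Fin 3, if b = a then 0 else personRate βU βT γU γR δR δT x i b)
          else personRate βU βT γU γR δR δT x i a) := by
    calc (∑ y, if y i = a then (∑ x, s t x * generatorQ βU βT γU γR δR δT x y) else 0)
        = ∑ y, ∑ x, (if y i = a then s t x * generatorQ βU βT γU γR δR δT x y else 0) := by
          simp only [ite_sum_pull]
      _ = ∑ x, ∑ y, (if y i = a then s t x * generatorQ βU βT γU γR δR δT x y else 0) :=
          Finset.sum_comm
      _ = ∑ x, s t x * ∑ y, (if y i = a then generatorQ βU βT γU γR δR δT x y else 0) := by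
          refine Finset.sum_congr rfl fun x _ => ?_
          rw [Finset.mul_sum]
          refine Finset.sum_congr rfl fun y _ => ?_
          split <;> simp
      _ = _ := by
          refine Finset.sum_congr rfl fun x _ => ?_
          rw [keyQ]
  exact heq ▸ hd

lemma pair_sum (s' : (Fin N → Fin 3) → ℝ) (c : Fin N → ℝ) (a b : Fin 3) (i : Fin N) :
    ∑ x : Fin N → Fin 3, s' x * (if x i = a then ∑ k, if x k = b then c k else 0 else 0)
      = ∑ k, c k * ∑ x : Fin N → Fin 3, if x i = a ∧ x k = b then s' x else 0 := by
  have h1 : ∀ x : Fin N → Fin 3,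
      s' x * (if x i = a then ∑ k, if x k = b then c k else 0 else 0)
      = ∑ k, if x i = a ∧ x k = b then c k * s' x else 0 := by
    intro x
    by_cases h : x i = a
    · rw [if_pos h, Finset.mul_sum]
      refine Finset.sum_congr rfl fun k _ => ?_
      by_cases h2 : x k = b <;> simp [h, h2, mul_comm]
    · simp [h]
  simp only [h1]
  rw [Finset.sum_comm]
  refine Finset.sum_congr rfl fun k _ => ?_
  rw [Finset.mul_sum]
  refine Finset.sum_congr rfl fun x _ => ?_
  split <;> simp [mul_comm]

lemma single_sum (s' : (Fin N → Fin 3) → ℝ) (d : ℝ) (a : Fin 3) (i : Fin N) :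
    ∑ x : Fin N → Fin 3, s' x * (if x i = a then d else 0)
      = d * ∑ x : Fin N → Fin 3, if x i = a then s' x else 0 := by
  rw [Finset.mul_sum]
  refine Finset.sum_congr rfl fun x _ => ?_
  split <;> simp [mul_comm]

end Deriv

section Eval
variable {N : ℕ} (βU βT γU γR : Fin N → Fin N → ℝ) (δR δT : Fin N → ℝ)

lemma F1_eval (i : Fin N) (x : Fin N → Fin 3) :
    (if x i = 1 then -(∑ b : Fin 3, if b = (1:Fin 3) then 0
        else personRate βU βT γU γR δR δT x i b)
      else personRate βU βT γU γR δR δT x i 1)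
    = (if x i = 0 then ∑ k, if x k = 1 then βU i k else 0 else 0)
      + (if x i = 2 then ∑ k, if x k = 1 then βT i k else 0 else 0)
      - ((if x i = 1 then ∑ k, if x k = 2 then γR i k else 0 else 0)
        + (if x i = 1 then δR i else 0)) := by
  have h3 : ∀ b : Fin 3, b = 0 ∨ b = 1 ∨ b = 2 := by decide
  rcases h3 (x i) with hx | hx | hx
  · simp [personRate, hx]
  · simp [personRate, hx, Fin.sum_univ_three]; ring
  · simp [personRate, hx]

lemma F2_eval (i : Fin N) (x : Fin N → Fin 3) :
    (if x i = 2 then -(∑ b : Fin 3, if b = (2:Fin 3) then 0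
        else personRate βU βT γU γR δR δT x i b)
      else personRate βU βT γU γR δR δT x i 2)
    = (if x i = 0 then ∑ k, if x k = 2 then γU i k else 0 else 0)
      + (if x i = 1 then ∑ k, if x k = 2 then γR i k else 0 else 0)
      - ((if x i = 2 then ∑ k, if x k = 1 then βT i k else 0 else 0)
        + (if x i = 2 then δT i else 0)) := by
  have h3 : ∀ b : Fin 3, b = 0 ∨ b = 1 ∨ b = 2 := by decide
  rcases h3 (x i) with hx | hx | hx
  · simp [personRate, hx]
  · simp [personRate, hx]
  · simp [personRate, hx, Fin.sum_univ_three]; ring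

end Eval

/-- Lemma 1: the marginals of the exact URTU model `ds^T/dt = s^T Q` satisfy
the equivalent system (3). -/
theorem exact_URTU_marginal_equations
    {N : ℕ} (hN : 0 < N)
    (βU βT γU γR : Fin N → Fin N → ℝ)
    (hβU : ∀ i j : Fin N, 0 ≤ βU i j) (hβT : ∀ i j : Fin N, 0 ≤ βT i j)
    (hγU : ∀ i j : Fin N, 0 ≤ γU i j) (hγR : ∀ i j : Fin N, 0 ≤ γR i j)
    (δR δT : Fin N → ℝ) (hδR : ∀ i, 0 < δR i) (hδT : ∀ i, 0 < δT i)
    (s : ℝ → (Fin N → Fin 3) → ℝ)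
    (hprob : ∀ t : ℝ, (∀ x, 0 ≤ s t x) ∧ (∑ x, s t x) = 1)
    (hsol : ∀ (y : Fin N → Fin 3) (t : ℝ), HasDerivAt (fun τ => s τ y)
      (∑ x, s t x * generatorQ βU βT γU γR δR δT x y) t)
    (i : Fin N) (t : ℝ) :
    HasDerivAt (fun τ => ∑ x, if x i = 1 then s τ x else 0)
      ((∑ j, βU i j * ∑ x, if x i = 0 ∧ x j = 1 then s t x else 0)
        + (∑ j, βT i j * ∑ x, if x i = 2 ∧ x j = 1 then s t x else 0)
        - (∑ j, γR i j * ∑ x, if x i = 1 ∧ x j = 2 then s t x else 0)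
        - δR i * (∑ x, if x i = 1 then s t x else 0)) t
    ∧ HasDerivAt (fun τ => ∑ x, if x i = 2 then s τ x else 0)
      ((∑ j, γU i j * ∑ x, if x i = 0 ∧ x j = 2 then s t x else 0)
        + (∑ j, γR i j * ∑ x, if x i = 1 ∧ x j = 2 then s t x else 0)
        - (∑ j, βT i j * ∑ x, if x i = 2 ∧ x j = 1 then s t x else 0)
        - δT i * (∑ x, if x i = 2 then s t x else 0)) t := by
  classical
  constructor
  · have hd := marginal_hasDerivAt βU βT γU γR δR δT s hsol i 1 t
    have e1 : (∑ x, s t x * (if x i = 1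
          then -(∑ b : Fin 3, if b = (1:Fin 3) then 0
            else personRate βU βT γU γR δR δT x i b)
          else personRate βU βT γU γR δR δT x i 1))
        = (∑ j, βU i j * ∑ x, if x i = 0 ∧ x j = 1 then s t x else 0)
          + (∑ j, βT i j * ∑ x, if x i = 2 ∧ x j = 1 then s t x else 0)
          - (∑ j, γR i j * ∑ x, if x i = 1 ∧ x j = 2 then s t x else 0)
          - δR i * (∑ x, if x i = 1 then s t x else 0) := by
      simp only [F1_eval βU βT γU γR δR δT i]
      simp only [mul_sub, mul_add]
      rw [Finset.sum_sub_distrib, Finset.sum_add_distrib, Finset.sum_add_distrib,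
        pair_sum, pair_sum, pair_sum, single_sum]
      ring
    exact e1 ▸ hd
  · have hd := marginal_hasDerivAt βU βT γU γR δR δT s hsol i 2 t
    have e2 : (∑ x, s t x * (if x i = 2
          then -(∑ b : Fin 3, if b = (2:Fin 3) then 0
            else personRate βU βT γU γR δR δT x i b)
          else personRate βU βT γU γR δR δT x i 2))
        = (∑ j, γU i j * ∑ x, if x i = 0 ∧ x j = 2 then s t x else 0)
          + (∑ j, γR i j * ∑ x, if x i = 1 ∧ x j = 2 then s t x else 0)
          - (∑ j, βT i j * ∑ x, if x i = 2 ∧ x j = 1 then s t x else 0)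
          - δT i * (∑ x, if x i = 2 then s t x else 0) := by
      simp only [F2_eval βU βT γU γR δR δT i]
      simp only [mul_sub, mul_add]
      rw [Finset.sum_sub_distrib, Finset.sum_add_distrib, Finset.sum_add_distrib,
        pair_sum, pair_sum, pair_sum, single_sum]
      ring
    exact e2 ▸ hd
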